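/- arXiv:2511.17640 — 11 statements merged into one kernel-verified Lean document; each statement's English description precedes it below -/
import Mathlib

section
/- For f, g ∈ M and any α ∈ [0,1], if △ : [0,1]² → [0,1] is monotone increasing in each argument and ∗ : [0,1]² → [0,1] is any binary operation, then the strong α-cut of the convolution f ∗_△ g equals the union over all pairs (α₁, α₂) with α₁ △ α₂ > α of the sets f^{α₁} ∗ g^{α₂}. -/
open unitInterval

instance : Fact ((0:ℝ) ≤ 1) := ⟨zero_le_one⟩

/-- Convolution of `f` and `g` with respect to `star` and `trg`:
`(f ∗_△ g)(x) = sup { f(y) △ g(z) : y ∗ z = x }`, with `sup ∅ = 0 = ⊥`. -/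
noncomputable def conv (star trg : I → I → I) (f g : I → I) : I → I :=
  fun x => sSup {v : I | ∃ y z : I, star y z = x ∧ v = trg (f y) (g z)}

/-- α-cut. -/
def cut (f : I → I) (a : I) : Set I := {x : I | a ≤ f x}

/-- strong α-cut. -/
def scut (f : I → I) (a : I) : Set I := {x : I | a < f x}

/-- Convexity of a function `[0,1] → [0,1]`. -/
def FnConvex (f : I → I) : Prop := ∀ x y z : I, x ≤ y → y ≤ z → min (f x) (f z) ≤ f y

/-- Normality: `sup f = 1`. -/
def FnNormal (f : I → I) : Prop := sSup (Set.range f) = 1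

/-- t-norm: commutative, associative, monotone in each argument, unit `1`. -/
def IsTnorm (t : I → I → I) : Prop :=
  (∀ a b, t a b = t b a) ∧ (∀ a b c, t (t a b) c = t a (t b c)) ∧
  (∀ a b c : I, a ≤ b → t a c ≤ t b c) ∧ (∀ a b c : I, b ≤ c → t a b ≤ t a c) ∧
  (∀ a, t a 1 = a)

noncomputable def fL (f : I → I) (x : I) : I := sSup (f '' Set.Iic x)
noncomputable def fR (f : I → I) (x : I) : I := sSup (f '' Set.Ici x)

/-- up-closure `↑A`. -/
def upC (A : Set I) : Set I := ⋃ x ∈ A, Set.Icc x 1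
/-- down-closure `↓A`. -/
def downC (A : Set I) : Set I := ⋃ x ∈ A, Set.Icc 0 x

/-- `A ∧ B = {min a b : a ∈ A, b ∈ B}`. -/
def setMin (A B : Set I) : Set I := Set.image2 min A B
/-- `A ≼ B` iff `A ∧ B = A`. -/
def pre (A B : Set I) : Prop := setMin A B = A

/-- convolution order `f ⊑ g` iff `f ∧_∧ g = f`. -/
noncomputable def convOrd (f g : I → I) : Prop :=
  conv (fun a b => min a b) (fun a b => min a b) f g = f

/-- `f⁺ = ⋃ {[0,a] : f monotone increasing on [0,a]}`. -/
def fplus (f : I → I) : Set I :=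
  ⋃₀ {S : Set I | ∃ a : I, S = Set.Icc 0 a ∧ MonotoneOn f (Set.Icc 0 a)}

open scoped Classical in
/-- characteristic function of a subset of `[0,1]`. -/
noncomputable def char (A : Set I) : I → I := fun x => if x ∈ A then 1 else 0

/-- t-power: `tpow t x n = x ∗ ⋯ ∗ x` (`n+1` factors). -/
def tpow (t : I → I → I) (x : I) : ℕ → I
  | 0 => x
  | n+1 => t x (tpow t x n)

/-- left-continuity in each argument. -/
def LeftCts (t : I → I → I) : Prop :=
  ∀ a b : I, ContinuousWithinAt (fun x => t a x) (Set.Iio b) b ∧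
             ContinuousWithinAt (fun x => t x b) (Set.Iio a) a

/-- border continuity: `a △ 1⁻ = a △ 1`. -/
def BorderCts (t : I → I → I) : Prop := ∀ a : I, sSup ((t a) '' Set.Iio 1) = t a 1
theorem stmt1 (star trg : I → I → I)
    (hmono1 : ∀ a b c : I, a ≤ b → trg a c ≤ trg b c)
    (hmono2 : ∀ a b c : I, b ≤ c → trg a b ≤ trg a c)
    (f g : I → I) (α : I) :
    scut (conv star trg f g) α =
      ⋃ p ∈ {p : I × I | α < trg p.1 p.2},
        Set.image2 star (cut f p.1) (cut g p.2) := by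
  ext x
  simp only [scut, conv, Set.mem_setOf_eq, Set.mem_iUnion, Set.mem_image2, cut]
  rw [lt_sSup_iff]
  constructor
  · rintro ⟨v, ⟨y, z, hyz, rfl⟩, hv⟩
    exact ⟨(f y, g z), hv, y, le_rfl, z, le_rfl, hyz⟩
  · rintro ⟨⟨a, b⟩, hab, y, hy, z, hz, hyz⟩
    exact ⟨trg (f y) (g z), ⟨y, z, hyz, rfl⟩,
      lt_of_lt_of_le hab (le_trans (hmono1 _ _ _ hy) (hmono2 _ _ _ hz))⟩
end

section
/- For f ∈ M, f is convex if and only if f = f^L ∧ f^R, where f^L(x) = sup{f(t) : t ≤ x} and f^R(x) = sup{f(t) : t ≥ x}. -/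
open unitInterval

theorem stmt3 (f : I → I) :
    FnConvex f ↔ f = fun x => min (fL f x) (fR f x) := by
  constructor
  · intro hc
    funext x
    apply le_antisymm
    · exact le_min (le_sSup ⟨x, Set.self_mem_Iic, rfl⟩) (le_sSup ⟨x, Set.self_mem_Ici, rfl⟩)
    · by_contra h
      push_neg at h
      have h1 : f x < fL f x := lt_of_lt_of_le h (min_le_left _ _)
      have h2 : f x < fR f x := lt_of_lt_of_le h (min_le_right _ _)
      obtain ⟨t, ⟨u, hu, rfl⟩, ht⟩ := lt_sSup_iff.mp h1
      obtain ⟨s, ⟨v, hv, rfl⟩, hs⟩ := lt_sSup_iff.mp h2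
      have := hc u x v hu hv
      exact absurd this (not_le.mpr (lt_min ht hs))
  · intro h x y z hxy hyz
    have : f y = min (fL f y) (fR f y) := congrFun h y
    rw [this]
    exact le_min
      (le_trans (min_le_left _ _) (le_sSup ⟨x, hxy, rfl⟩))
      (le_trans (min_le_right _ _) (le_sSup ⟨z, hyz, rfl⟩))
end

section
/- For f ∈ M, f is convex if and only if f is the pointwise minimum of a monotone increasing function and a monotone decreasing function from [0,1] to [0,1]. -/
open unitInterval

/- Convexity says no value of `f` exceeds `f x` on both sides of `x`; so the running suprema
`fL f` and `fR f` of `f` from the left and from the right, which are monotone and antitone,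
have minimum exactly `f`. -/

open Set

section

variable {α β : Type*} [Preorder α]

theorem min_monotone_antitone_le [LinearOrder β] {g h : α → β} (hg : Monotone g)
    (hh : Antitone h) {x y z : α} (hxy : x ≤ y) (hyz : y ≤ z) :
    min (min (g x) (h x)) (min (g z) (h z)) ≤ min (g y) (h y) :=
  calc min (min (g x) (h x)) (min (g z) (h z))
      ≤ min (g x) (h z) := min_le_min (min_le_left _ _) (min_le_right _ _)
    _ ≤ min (g y) (h y) := min_le_min (hg hxy) (hh hyz)

variable [CompleteLinearOrder β]

theorem monotone_sSup_image_Iic (f : α → β) : Monotone fun x => sSup (f '' Iic x) :=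
  fun _ _ hxy => sSup_le_sSup (image_mono (Iic_subset_Iic.2 hxy))

theorem antitone_sSup_image_Ici (f : α → β) : Antitone fun x => sSup (f '' Ici x) :=
  fun _ _ hxy => sSup_le_sSup (image_mono (Ici_subset_Ici.2 hxy))

theorem min_sSup_image_Iic_sSup_image_Ici {f : α → β}
    (hf : ∀ x y z, x ≤ y → y ≤ z → min (f x) (f z) ≤ f y) (x : α) :
    min (sSup (f '' Iic x)) (sSup (f '' Ici x)) = f x := by
  refine le_antisymm ?_ (le_min (le_sSup ⟨x, le_rfl, rfl⟩) (le_sSup ⟨x, le_rfl, rfl⟩))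
  rw [sSup_image, sSup_image, biSup_inf_biSup]
  exact iSup₂_le fun p hp => hf _ _ _ hp.1 hp.2

theorem forall_min_le_iff_exists_monotone_antitone (f : α → β) :
    (∀ x y z, x ≤ y → y ≤ z → min (f x) (f z) ≤ f y) ↔
      ∃ g h : α → β, Monotone g ∧ Antitone h ∧ f = fun x => min (g x) (h x) := by
  constructor
  · intro hf
    exact ⟨_, _, monotone_sSup_image_Iic f, antitone_sSup_image_Ici f,
      funext fun x => (min_sSup_image_Iic_sSup_image_Ici hf x).symm⟩
  · rintro ⟨g, h, hg, hh, rfl⟩ x y z hxy hyz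
    exact min_monotone_antitone_le hg hh hxy hyz

end

theorem stmt6 (f : I → I) :
    FnConvex f ↔
      ∃ g h : I → I, Monotone g ∧ Antitone h ∧ f = fun x => min (g x) (h x) :=
  forall_min_le_iff_exists_monotone_antitone f
end

section
/- For f, g ∈ L (normal convex functions from [0,1] to [0,1]), f ⊑ g if and only if f^{α̂} ≼ g^{α̂} for all α ∈ [0,1). -/
open unitInterval

lemma scut_conv9 (f g : I → I) (α : I) :
    scut (conv (fun a b => min a b) (fun a b => min a b) f g) α
      = setMin (scut f α) (scut g α) := by
  ext x
  simp only [scut, conv, Set.mem_setOf_eq, setMin, Set.mem_image2]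
  rw [lt_sSup_iff]
  constructor
  · rintro ⟨v, ⟨y, z, hyz, rfl⟩, hv⟩
    exact ⟨y, lt_of_lt_of_le hv (min_le_left _ _), z,
      lt_of_lt_of_le hv (min_le_right _ _), hyz⟩
  · rintro ⟨y, hy, z, hz, hyz⟩
    exact ⟨min (f y) (g z), ⟨y, z, hyz, rfl⟩, lt_min hy hz⟩

lemma eq_of_forall_lt9 (a b : I) (h : ∀ α : I, α < 1 → (α < a ↔ α < b)) : a = b := by
  by_contra hne
  rcases lt_or_gt_of_ne hne with hlt | hlt
  · exact absurd ((h a (lt_of_lt_of_le hlt le_one')).mpr hlt) (lt_irrefl a)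
  · exact absurd ((h b (lt_of_lt_of_le hlt le_one')).mp hlt) (lt_irrefl b)

theorem stmt9 (f g : I → I) (hfn : FnNormal f) (hfc : FnConvex f)
    (hgn : FnNormal g) (hgc : FnConvex g) :
    convOrd f g ↔ ∀ α : I, α < 1 → pre (scut f α) (scut g α) := by
  constructor
  · intro h α hα
    unfold pre
    rw [← scut_conv9, h]
  · intro h
    funext x
    apply eq_of_forall_lt9
    intro α hα
    have key : scut (conv (fun a b => min a b) (fun a b => min a b) f g) α = scut f α := by
      rw [scut_conv9, h α hα]
    constructor
    · intro hlt
      have hx : x ∈ scut (conv (fun a b => min a b) (fun a b => min a b) f g) α := hlt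
      rw [key] at hx
      exact hx
    · intro hlt
      have hx : x ∈ scut f α := hlt
      rw [← key] at hx
      exact hx
end

section
/- For nonempty convex subsets A, B of [0,1], A ≼ B (i.e., A ∧ B = A) if and only if ↑B ⊆ ↑A and ↓A ⊆ ↓B. -/
open unitInterval

lemma mem_upC {A : Set I} {x : I} : x ∈ upC A ↔ ∃ a ∈ A, a ≤ x := by
  simp only [upC, Set.mem_iUnion, Set.mem_Icc, exists_prop]
  exact ⟨fun ⟨a, ha, h, _⟩ => ⟨a, ha, h⟩, fun ⟨a, ha, h⟩ => ⟨a, ha, h, unitInterval.le_one x⟩⟩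

lemma mem_downC {A : Set I} {x : I} : x ∈ downC A ↔ ∃ a ∈ A, x ≤ a := by
  simp only [downC, Set.mem_iUnion, Set.mem_Icc, exists_prop]
  exact ⟨fun ⟨a, ha, _, h⟩ => ⟨a, ha, h⟩, fun ⟨a, ha, h⟩ => ⟨a, ha, unitInterval.nonneg x, h⟩⟩

theorem stmt11 (A B : Set I) (hA : A.Nonempty) (hA' : A.OrdConnected)
    (hB : B.Nonempty) (hB' : B.OrdConnected) :
    pre A B ↔ upC B ⊆ upC A ∧ downC A ⊆ downC B := by
  constructor
  · rintro h
    constructor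
    · intro x hx
      rw [mem_upC] at hx ⊢
      obtain ⟨b, hb, hbx⟩ := hx
      obtain ⟨a, ha⟩ := hA
      refine ⟨min a b, ?_, le_trans (min_le_right a b) hbx⟩
      rw [← h]; exact Set.mem_image2_of_mem ha hb
    · intro x hx
      rw [mem_downC] at hx ⊢
      obtain ⟨a, ha, hxa⟩ := hx
      rw [← h] at ha
      obtain ⟨a', ha', b, hb, rfl⟩ := ha
      exact ⟨b, hb, le_trans hxa (min_le_right a' b)⟩
  · rintro ⟨h1, h2⟩
    apply Set.Subset.antisymm
    · rintro x ⟨a, ha, b, hb, rfl⟩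
      rcases le_total a b with hab | hba
      · rwa [min_eq_left hab]
      · rw [min_eq_right hba]
        have hbU : b ∈ upC A := h1 (mem_upC.mpr ⟨b, hb, le_refl b⟩)
        obtain ⟨a', ha', ha'b⟩ := mem_upC.mp hbU
        exact hA'.out ha' ha ⟨ha'b, hba⟩
    · intro a ha
      have : a ∈ downC B := h2 (mem_downC.mpr ⟨a, ha, le_refl a⟩)
      obtain ⟨b, hb, hab⟩ := mem_downC.mp this
      exact ⟨a, ha, b, hb, min_eq_left hab⟩
end

section
/- Let {A_i}_{i∈Λ} and {B_i}_{i∈Λ} be families of nonempty convex subsets of [0,1] with A_i ≼ B_i for each i. If both ⋃ A_i and ⋃ B_i are convex, then ⋃ A_i ≼ ⋃ B_i. If both ⋂ A_i and ⋂ B_i are nonempty, then ⋂ A_i ≼ ⋂ B_i. -/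
open unitInterval

lemma pre_of_bounds {A B : Set I} (hA : A.OrdConnected)
    (h1 : ∀ b ∈ B, ∃ a ∈ A, a ≤ b) (h2 : ∀ a ∈ A, ∃ b ∈ B, a ≤ b) :
    pre A B := by
  ext x
  constructor
  · rintro ⟨a, ha, b, hb, rfl⟩
    rcases le_total a b with h | h
    · rwa [min_eq_left h]
    · rw [min_eq_right h]
      obtain ⟨a', ha', hab⟩ := h1 b hb
      exact hA.out ha' ha ⟨hab, h⟩
  · intro hx
    obtain ⟨b, hb, hxb⟩ := h2 x hx
    exact ⟨x, hx, b, hb, min_eq_left hxb⟩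

lemma bounds_of_pre {A B : Set I} (hAne : A.Nonempty) (h : pre A B) :
    (∀ b ∈ B, ∃ a ∈ A, a ≤ b) ∧ (∀ a ∈ A, ∃ b ∈ B, a ≤ b) := by
  constructor
  · intro b hb
    obtain ⟨a, ha⟩ := hAne
    refine ⟨min a b, ?_, min_le_right _ _⟩
    rw [← h]; exact ⟨a, ha, b, hb, rfl⟩
  · intro a ha
    rw [← h] at ha
    obtain ⟨a', _, b', hb', hab⟩ := ha
    exact ⟨b', hb', hab ▸ min_le_right _ _⟩

theorem stmt13 {L : Type*} (A B : L → Set I)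
    (hAne : ∀ i, (A i).Nonempty) (hAconv : ∀ i, (A i).OrdConnected)
    (hBne : ∀ i, (B i).Nonempty) (hBconv : ∀ i, (B i).OrdConnected)
    (hpre : ∀ i, pre (A i) (B i)) :
    ((⋃ i, A i).OrdConnected → (⋃ i, B i).OrdConnected →
      pre (⋃ i, A i) (⋃ i, B i)) ∧
    ((⋂ i, A i).Nonempty → (⋂ i, B i).Nonempty →
      pre (⋂ i, A i) (⋂ i, B i)) := by
  constructor
  · intro hU _
    refine pre_of_bounds hU ?_ ?_
    · rintro b hb
      obtain ⟨i, hbi⟩ := Set.mem_iUnion.mp hb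
      obtain ⟨a, ha, hab⟩ := (bounds_of_pre (hAne i) (hpre i)).1 b hbi
      exact ⟨a, Set.mem_iUnion.mpr ⟨i, ha⟩, hab⟩
    · rintro a ha
      obtain ⟨i, hai⟩ := Set.mem_iUnion.mp ha
      obtain ⟨b, hb, hab⟩ := (bounds_of_pre (hAne i) (hpre i)).2 a hai
      exact ⟨b, Set.mem_iUnion.mpr ⟨i, hb⟩, hab⟩
  · intro hAI hBI
    refine pre_of_bounds (Set.ordConnected_iInter fun i => hAconv i) ?_ ?_
    · intro b hb
      obtain ⟨a0, ha0⟩ := hAI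
      rcases le_total a0 b with h | h
      · exact ⟨a0, ha0, h⟩
      · refine ⟨b, Set.mem_iInter.mpr fun i => ?_, le_refl b⟩
        obtain ⟨a, ha, hab⟩ := (bounds_of_pre (hAne i) (hpre i)).1 b (Set.mem_iInter.mp hb i)
        exact (hAconv i).out ha (Set.mem_iInter.mp ha0 i) ⟨hab, h⟩
    · intro a ha
      obtain ⟨b0, hb0⟩ := hBI
      rcases le_total a b0 with h | h
      · exact ⟨b0, hb0, h⟩
      · refine ⟨a, Set.mem_iInter.mpr fun i => ?_, le_refl a⟩
        obtain ⟨b, hb, hab⟩ := (bounds_of_pre (hAne i) (hpre i)).2 a (Set.mem_iInter.mp ha i)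
        exact (hBconv i).out (Set.mem_iInter.mp hb0 i) hb ⟨h, hab⟩
end

section
/- For f, g ∈ L, the following are equivalent: (i) f ⊑ g; (ii) f^{α̂} ≼ g^{α̂} for all α ∈ (0,1); (iii) f^α ≼ g^α for all α ∈ (0,1). -/
open unitInterval

-- auxiliary lemmas
lemma le_fR {f : I → I} {x a : I} (h : x ≤ a) : f a ≤ fR f x :=
  le_sSup ⟨a, h, rfl⟩

lemma self_le_fR (f : I → I) (x : I) : f x ≤ fR f x := le_fR le_rfl

lemma aux_le_sSup (f g : I → I) (x : I) :
    min (f x) (fR g x) ≤ sSup {v : I | ∃ y z : I, min y z = x ∧ v = min (f y) (g z)} := by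
  by_cases h : ∃ z, x ≤ z ∧ f x ≤ g z
  · obtain ⟨z, hz, hfz⟩ := h
    have h1 : min (f x) (fR g x) ≤ f x := min_le_left _ _
    have h2 : f x = min (f x) (g z) := (min_eq_left hfz).symm
    refine h1.trans ?_
    rw [h2]
    exact le_sSup ⟨x, z, min_eq_left hz, rfl⟩
  · push_neg at h
    have h1 : fR g x ≤ sSup {v : I | ∃ y z : I, min y z = x ∧ v = min (f y) (g z)} := by
      apply sSup_le
      rintro v ⟨z, hz, rfl⟩
      have : g z = min (f x) (g z) := (min_eq_right (h z hz).le).symm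
      rw [this]
      exact le_sSup ⟨x, z, min_eq_left hz, rfl⟩
    exact (min_le_right _ _).trans h1

lemma conv_min_eq (f g : I → I) (x : I) :
    conv (fun a b => min a b) (fun a b => min a b) f g x
      = max (min (f x) (fR g x)) (min (g x) (fR f x)) := by
  apply le_antisymm
  · apply sSup_le
    rintro v ⟨y, z, hyz, rfl⟩
    rcases le_total y z with h | h
    · have hy : y = x := by rw [← hyz]; exact (min_eq_left h).symm
      subst hy
      have hz : y ≤ z := h
      exact le_max_of_le_left (min_le_min le_rfl (le_fR hz))
    · have hz : z = x := by rw [← hyz]; exact (min_eq_right h).symm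
      subst hz
      refine le_max_of_le_right ?_
      show min (f y) (g z) ≤ _
      rw [min_comm (f y) (g z)]
      exact min_le_min le_rfl (le_fR h)
  · apply max_le
    · exact aux_le_sSup f g x
    · have := aux_le_sSup g f x
      refine this.trans (le_of_eq ?_)
      congr 1
      ext v
      simp only [Set.mem_setOf_eq]
      constructor
      · rintro ⟨y, z, hyz, rfl⟩
        exact ⟨z, y, by rw [min_comm]; exact hyz,
          by rw [min_comm]⟩
      · rintro ⟨y, z, hyz, rfl⟩
        exact ⟨z, y, by rw [min_comm]; exact hyz,
          by rw [min_comm]⟩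

def PW (f g : I → I) : Prop := ∀ x : I, min (g x) (fR f x) ≤ f x ∧ f x ≤ fR g x

lemma convOrd_iff_PW (f g : I → I) : convOrd f g ↔ PW f g := by
  unfold convOrd
  rw [funext_iff]
  constructor
  · intro h x
    have hx := h x
    rw [conv_min_eq] at hx
    constructor
    · rw [← hx]; exact le_max_right _ _
    · rcases max_cases (min (f x) (fR g x)) (min (g x) (fR f x)) with ⟨heq, _⟩ | ⟨heq, _⟩
      · rw [heq] at hx
        calc f x = min (f x) (fR g x) := hx.symm
          _ ≤ fR g x := min_le_right _ _
      · rw [heq] at hx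
        calc f x = min (g x) (fR f x) := hx.symm
          _ ≤ g x := min_le_left _ _
          _ ≤ fR g x := self_le_fR g x
  · intro h x
    rw [conv_min_eq]
    obtain ⟨h1, h2⟩ := h x
    rw [min_eq_left h2]
    exact max_eq_left (h1.trans (le_max_left _ _)) ▸ max_eq_left h1

lemma PW_iff_scut (f g : I → I) :
    PW f g ↔ ∀ α : I, 0 < α → α < 1 → pre (scut f α) (scut g α) := by
  constructor
  · intro h α hα0 hα1
    apply Set.Subset.antisymm
    · rintro v ⟨a, ha, b, hb, rfl⟩
      rcases le_total a b with hab | hab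
      · rwa [min_eq_left hab]
      · rw [min_eq_right hab]
        have h1 := (h b).1
        have h2 : α < min (g b) (fR f b) := lt_min hb (lt_of_lt_of_le ha (le_fR hab))
        exact lt_of_lt_of_le h2 h1
    · intro a ha
      have h2 : α < fR g a := lt_of_lt_of_le ha (h a).2
      obtain ⟨v, ⟨b, hb, rfl⟩, hv⟩ := lt_sSup_iff.mp h2
      exact ⟨a, ha, b, hv, min_eq_left hb⟩
  · intro h x
    constructor
    · by_contra hc
      push_neg at hc
      have hg : f x < g x := lt_of_lt_of_le hc (min_le_left _ _)
      have hf : f x < fR f x := lt_of_lt_of_le hc (min_le_right _ _)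
      obtain ⟨v, ⟨a, hax, rfl⟩, hv⟩ := lt_sSup_iff.mp hf
      have hxm : f x < min (g x) (f a) := lt_min hg hv
      obtain ⟨α, h1, h2⟩ := exists_between hxm
      have hα0 : 0 < α := lt_of_le_of_lt nonneg' h1
      have hα1 : α < 1 := lt_of_lt_of_le h2 ((min_le_left _ _).trans le_one')
      have hp := h α hα0 hα1
      have hmem : x ∈ setMin (scut f α) (scut g α) :=
        ⟨a, lt_of_lt_of_le h2 (min_le_right _ _),
         x, lt_of_lt_of_le h2 (min_le_left _ _), min_eq_right hax⟩
      rw [hp] at hmem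
      exact absurd hmem (not_lt.mpr h1.le)
    · by_contra hc
      push_neg at hc
      obtain ⟨α, h1, h2⟩ := exists_between hc
      have hα0 : 0 < α := lt_of_le_of_lt nonneg' h1
      have hα1 : α < 1 := lt_of_lt_of_le h2 le_one'
      have hp := h α hα0 hα1
      have hx : x ∈ scut f α := h2
      rw [← hp] at hx
      obtain ⟨a, ha, b, hb, hab⟩ := hx
      have hxb : x ≤ b := hab ▸ min_le_right a b
      exact absurd hb (not_lt.mpr ((le_fR hxb).trans h1.le))

lemma PW_iff_cut (f g : I → I) (hgn : FnNormal g) (hgc : FnConvex g) :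
    PW f g ↔ ∀ α : I, 0 < α → α < 1 → pre (cut f α) (cut g α) := by
  constructor
  · intro h α hα0 hα1
    apply Set.Subset.antisymm
    · rintro v ⟨a, ha, b, hb, rfl⟩
      rcases le_total a b with hab | hab
      · rwa [min_eq_left hab]
      · rw [min_eq_right hab]
        have h2 : α ≤ min (g b) (fR f b) := le_min hb (ha.trans (le_fR hab))
        exact h2.trans (h b).1
    · intro a ha
      by_contra hna
      have hne : ∀ b : I, a ≤ b → g b < α := by
        intro b hb
        by_contra hgb
        push_neg at hgb
        exact hna ⟨a, ha, b, hgb, min_eq_left hb⟩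
      have hb0 : ∃ b0 : I, α < g b0 := by
        by_contra h'
        push_neg at h'
        have : sSup (Set.range g) ≤ α := sSup_le (by rintro v ⟨b, rfl⟩; exact h' b)
        rw [hgn] at this
        exact absurd (this.trans_lt hα1) (lt_irrefl _)
      obtain ⟨b0, hb0⟩ := hb0
      have hb0a : b0 ≤ a := by
        by_contra h'
        push_neg at h'
        exact absurd hb0 (not_lt.mpr (hne b0 h'.le).le)
      have hz : ∀ z : I, a ≤ z → g z ≤ g a := by
        intro z hzz
        have := hgc b0 a z hb0a hzz
        rwa [min_eq_right ((hne z hzz).trans hb0).le] at this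
      have hfr : fR g a ≤ g a := sSup_le (by rintro v ⟨z, hzz, rfl⟩; exact hz z hzz)
      have : f a ≤ g a := (h a).2.trans hfr
      exact absurd (ha.trans this) (not_le.mpr (hne a le_rfl))
  · intro h x
    constructor
    · by_contra hc
      push_neg at hc
      have hg : f x < g x := lt_of_lt_of_le hc (min_le_left _ _)
      have hf : f x < fR f x := lt_of_lt_of_le hc (min_le_right _ _)
      obtain ⟨v, ⟨a, hax, rfl⟩, hv⟩ := lt_sSup_iff.mp hf
      have hxm : f x < min (g x) (f a) := lt_min hg hv
      obtain ⟨α, h1, h2⟩ := exists_between hxm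
      have hα0 : 0 < α := lt_of_le_of_lt nonneg' h1
      have hα1 : α < 1 := lt_of_lt_of_le h2 ((min_le_left _ _).trans le_one')
      have hp := h α hα0 hα1
      have hmem : x ∈ setMin (cut f α) (cut g α) :=
        ⟨a, (h2.le.trans (min_le_right _ _)),
         x, (h2.le.trans (min_le_left _ _)), min_eq_right hax⟩
      rw [hp] at hmem
      exact absurd hmem (not_le.mpr h1)
    · by_contra hc
      push_neg at hc
      obtain ⟨α, h1, h2⟩ := exists_between hc
      have hα0 : 0 < α := lt_of_le_of_lt nonneg' h1
      have hα1 : α < 1 := lt_of_lt_of_le h2 le_one'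
      have hp := h α hα0 hα1
      have hx : x ∈ cut f α := h2.le
      rw [← hp] at hx
      obtain ⟨a, ha, b, hb, hab⟩ := hx
      have hxb : x ≤ b := hab ▸ min_le_right a b
      exact absurd (hb.trans (le_fR hxb)) (not_le.mpr h1)

theorem stmt14 (f g : I → I) (hfn : FnNormal f) (hfc : FnConvex f)
    (hgn : FnNormal g) (hgc : FnConvex g) :
    (convOrd f g ↔ ∀ α : I, 0 < α → α < 1 → pre (scut f α) (scut g α)) ∧
    (convOrd f g ↔ ∀ α : I, 0 < α → α < 1 → pre (cut f α) (cut g α)) :=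
  ⟨(convOrd_iff_PW f g).trans (PW_iff_scut f g),
   (convOrd_iff_PW f g).trans (PW_iff_cut f g hgn hgc)⟩
end

section
/- If ∗ is a continuous t-norm on [0,1], then for nonempty convex subsets A, B, C of [0,1], A ≼ B implies A ∗ C ≼ B ∗ C. -/
open unitInterval

theorem stmt15 (star : I → I → I) (ht : IsTnorm star)
    (hc : Continuous fun p : I × I => star p.1 p.2)
    (A B C : Set I) (hA : A.Nonempty) (hA' : A.OrdConnected)
    (hB : B.Nonempty) (hB' : B.OrdConnected)
    (hC : C.Nonempty) (hC' : C.OrdConnected)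
    (hAB : pre A B) :
    pre (Set.image2 star A C) (Set.image2 star B C) := by
  obtain ⟨hcomm, hassoc, hm1, hm2, hunit⟩ := ht
  have hACoc : (Set.image2 star A C).OrdConnected := by
    have : IsPreconnected (Set.image2 star A C) := by
      rw [← Set.image_prod]
      exact (hA'.isPreconnected.prod hC'.isPreconnected).image _ hc.continuousOn
    exact this.ordConnected
  unfold pre setMin at hAB ⊢
  apply Set.Subset.antisymm
  · rintro x ⟨p, ⟨a, ha, c, hc1, rfl⟩, q, ⟨b, hb, c2, hc2, rfl⟩, rfl⟩
    rcases le_total (star a c) (star b c2) with h | h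
    · rw [min_eq_left h]
      exact Set.mem_image2_of_mem ha hc1
    · rw [min_eq_right h]
      have ha0 : min a b ∈ A := hAB ▸ Set.mem_image2_of_mem ha hb
      exact hACoc.out (Set.mem_image2_of_mem ha0 hc2) (Set.mem_image2_of_mem ha hc1)
        ⟨hm1 _ _ _ (min_le_right a b), h⟩
  · rintro x ⟨a, ha, c, hc1, rfl⟩
    have : a ∈ Set.image2 min A B := by rw [hAB]; exact ha
    obtain ⟨a', ha', b, hb, hab⟩ := this
    have hle : a ≤ b := hab ▸ min_le_right a' b
    have : star a c = min (star a c) (star b c) := (min_eq_left (hm1 _ _ _ hle)).symm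
    rw [this]
    exact Set.mem_image2_of_mem (Set.mem_image2_of_mem ha hc1) (Set.mem_image2_of_mem hb hc1)
end

section
/- If ∗ is a continuous t-norm on [0,1] and △ is a t-norm on [0,1] that is continuous at (1,1), then for all normal convex f, g : [0,1] → [0,1], the convolution f ∗_△ g is normal and convex. -/
open unitInterval

lemma exists_gt_of_lt_sSup {S : Set I} {a : I} (h : a < sSup S) : ∃ v ∈ S, a < v := by
  by_contra hc
  push_neg at hc
  exact absurd (sSup_le hc) (not_le.2 h)

/-- IVT for a continuous monotone star. -/
lemma ivt_star (star : I → I → I) (hs : IsTnorm star)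
    (hsc : Continuous fun p : I × I => star p.1 p.2)
    {a c b d y : I} (hac : a ≤ c) (hbd : b ≤ d)
    (h1 : star a b ≤ y) (h2 : y ≤ star c d) :
    ∃ p q, a ≤ p ∧ p ≤ c ∧ b ≤ q ∧ q ≤ d ∧ star p q = y := by
  obtain ⟨-, -, hm1, hm2, -⟩ := hs
  rcases le_total y (star c b) with h3 | h3
  · have hcont : ContinuousOn (fun t => star t b) (Set.Icc a c) :=
      (hsc.comp (continuous_id.prodMk continuous_const)).continuousOn
    have := intermediate_value_Icc hac hcont (Set.mem_Icc.2 ⟨h1, h3⟩)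
    obtain ⟨p, hp, hpy⟩ := this
    exact ⟨p, b, hp.1, hp.2, le_refl b, hbd, hpy⟩
  · have hcont : ContinuousOn (fun t => star c t) (Set.Icc b d) :=
      (hsc.comp (continuous_const.prodMk continuous_id)).continuousOn
    have := intermediate_value_Icc hbd hcont (Set.mem_Icc.2 ⟨h3, h2⟩)
    obtain ⟨q, hq, hqy⟩ := this
    exact ⟨c, q, hac, le_refl c, hq.1, hq.2, hqy⟩

theorem stmt16 (star trg : I → I → I) (hs : IsTnorm star)
    (hsc : Continuous fun p : I × I => star p.1 p.2)
    (ht : IsTnorm trg)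
    (htc : ContinuousAt (fun p : I × I => trg p.1 p.2) (1, 1))
    (f g : I → I) (hfn : FnNormal f) (hfc : FnConvex f)
    (hgn : FnNormal g) (hgc : FnConvex g) :
    FnNormal (conv star trg f g) ∧ FnConvex (conv star trg f g) := by
  obtain ⟨htcomm, -, htm1, htm2, htu⟩ := ht
  have hmem : ∀ (p q : I), trg (f p) (g q) ∈
      {v : I | ∃ y z : I, star y z = star p q ∧ v = trg (f y) (g z)} :=
    fun p q => ⟨p, q, rfl, rfl⟩
  constructor
  · -- normality
    apply le_antisymm
    · exact sSup_le (fun v _ => le_one')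
    · apply le_of_forall_lt
      intro α hα
      -- δ from continuity of trg at (1,1)
      have h11 : trg 1 1 = 1 := htu 1
      have hU : (fun p : I × I => trg p.1 p.2) ⁻¹' Set.Ioi α ∈ nhds ((1 : I), (1 : I)) := by
        apply htc.preimage_mem_nhds
        rw [h11]
        exact Ioi_mem_nhds hα
      rw [mem_nhds_prod_iff] at hU
      obtain ⟨u, hu, v, hv, huv⟩ := hU
      obtain ⟨δ₁, hδ₁, hδ₁s⟩ := exists_Ioc_subset_of_mem_nhds hu ⟨0, zero_lt_one⟩
      obtain ⟨δ₂, hδ₂, hδ₂s⟩ := exists_Ioc_subset_of_mem_nhds hv ⟨0, zero_lt_one⟩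
      set δ : I := max δ₁ δ₂ with hδdef
      have hδ : δ < 1 := max_lt hδ₁ hδ₂
      obtain ⟨v₁, ⟨p₀, rfl⟩, hp₀⟩ := exists_gt_of_lt_sSup (hfn ▸ hδ : δ < sSup (Set.range f))
      obtain ⟨v₂, ⟨q₀, rfl⟩, hq₀⟩ := exists_gt_of_lt_sSup (hgn ▸ hδ : δ < sSup (Set.range g))
      have hfp : f p₀ ∈ u := hδ₁s ⟨lt_of_le_of_lt (le_max_left _ _) hp₀, le_one'⟩
      have hgq : g q₀ ∈ v := hδ₂s ⟨lt_of_le_of_lt (le_max_right _ _) hq₀, le_one'⟩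
      have hval : α < trg (f p₀) (g q₀) := huv (Set.mk_mem_prod hfp hgq)
      calc α < trg (f p₀) (g q₀) := hval
        _ ≤ conv star trg f g (star p₀ q₀) := le_sSup (hmem p₀ q₀)
        _ ≤ sSup (Set.range (conv star trg f g)) := le_sSup ⟨star p₀ q₀, rfl⟩
  · -- convexity
    intro x y z hxy hyz
    apply le_of_forall_lt
    intro α hα
    have hx : α < conv star trg f g x := lt_of_lt_of_le hα (min_le_left _ _)
    have hz : α < conv star trg f g z := lt_of_lt_of_le hα (min_le_right _ _)
    rw [conv] at hx hz
    obtain ⟨v, ⟨a, b, hab, rfl⟩, hv⟩ := exists_gt_of_lt_sSup hx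
    obtain ⟨w, ⟨c, d, hcd, rfl⟩, hw⟩ := exists_gt_of_lt_sSup hz
    -- pick p₀ ∈ {a,c} with f p₀ = max, q₀ ∈ {b,d} with g q₀ = max
    obtain ⟨p₀, hp₀a, hp₀c⟩ : ∃ p₀ : I, f a ≤ f p₀ ∧ f c ≤ f p₀ := by
      rcases le_total (f a) (f c) with h | h
      · exact ⟨c, h, le_refl _⟩
      · exact ⟨a, le_refl _, h⟩
    obtain ⟨q₀, hq₀b, hq₀d⟩ : ∃ q₀ : I, g b ≤ g q₀ ∧ g d ≤ g q₀ := by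
      rcases le_total (g b) (g d) with h | h
      · exact ⟨d, h, le_refl _⟩
      · exact ⟨b, le_refl _, h⟩
    obtain ⟨-, -, hsm1, hsm2, -⟩ := id hs
    -- key: for p between r and p₀ (f p₀ ≥ f r), f r ≤ f p
    have key : ∀ (h : I → I), FnConvex h → ∀ r r₀ p : I, h r ≤ h r₀ →
        r ≤ p → p ≤ r ⊔ r₀ → h r ≤ h p := by
      intro h hconv r r₀ p hrr₀ hrp hpr
      rcases le_total r₀ r with hc | hc
      · have : p = r := le_antisymm (by simpa [sup_eq_left.2 hc] using hpr) hrp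
        simp [this]
      · have := hconv r p r₀ hrp (by simpa [sup_eq_right.2 hc] using hpr)
        exact le_trans (le_min (le_refl _) hrr₀) this
    have key' : ∀ (h : I → I), FnConvex h → ∀ r r₀ p : I, h r ≤ h r₀ →
        r₀ ≤ p → p ≤ r ⊔ r₀ → h r ≤ h p := by
      intro h hconv r r₀ p hrr₀ hrp hpr
      rcases le_total r r₀ with hc | hc
      · have : p = r₀ := le_antisymm (by simpa [sup_eq_right.2 hc] using hpr) hrp
        exact this ▸ hrr₀
      · have := hconv r₀ p r hrp (by simpa [sup_eq_left.2 hc] using hpr)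
        exact le_trans (le_min hrr₀ (le_refl _)) this
    rcases le_total y (star p₀ q₀) with he | he
    · -- path from (a,b) up to (a ⊔ p₀, b ⊔ q₀)
      obtain ⟨p, q, hap, hpc, hbq, hqd, hpq⟩ := ivt_star star hs hsc
        (le_sup_left : a ≤ a ⊔ p₀) (le_sup_left : b ≤ b ⊔ q₀)
        (hab ▸ hxy)
        (le_trans he (le_trans (hsm1 _ _ _ le_sup_right) (hsm2 _ _ _ le_sup_right)))
      have hfp : f a ≤ f p := key f hfc a p₀ p hp₀a hap hpc
      have hgq : g b ≤ g q := key g hgc b q₀ q hq₀b hbq hqd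
      calc α < trg (f a) (g b) := hv
        _ ≤ trg (f p) (g q) := le_trans (htm1 _ _ _ hfp) (htm2 _ _ _ hgq)
        _ ≤ conv star trg f g y := hpq ▸ le_sSup (hmem p q)
    · -- path from (p₀, q₀) up to (c ⊔ p₀, d ⊔ q₀)
      obtain ⟨p, q, hap, hpc, hbq, hqd, hpq⟩ := ivt_star star hs hsc
        (le_sup_right : p₀ ≤ c ⊔ p₀) (le_sup_right : q₀ ≤ d ⊔ q₀)
        he
        (le_trans (hcd ▸ hyz) (le_trans (hsm1 _ _ _ le_sup_left) (hsm2 _ _ _ le_sup_left)))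
      have hfp : f c ≤ f p := key' f hfc c p₀ p hp₀c hap hpc
      have hgq : g d ≤ g q := key' g hgc d q₀ q hq₀d hbq hqd
      calc α < trg (f c) (g d) := hw
        _ ≤ trg (f p) (g q) := le_trans (htm1 _ _ _ hfp) (htm2 _ _ _ hgq)
        _ ≤ conv star trg f g y := hpq ▸ le_sSup (hmem p q)
end

section
/- If ∗ and △ are t-norms on [0,1] and △ is left-continuous (in each argument), then the convolution ∗_△ is associative on M = Map([0,1],[0,1]): for all f, g, h, (f ∗_△ g) ∗_△ h = f ∗_△ (g ∗_△ h), and both sides at a point a equal sup{f(x) △ g(y) △ h(z) : x ∗ y ∗ z = a}. -/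
open unitInterval

lemma map_sSup_gen (φ : I → I) (hmono : Monotone φ) (hbot : ∀ x, φ x ≤ φ 1)
    (hc : ∀ c : I, ContinuousWithinAt φ (Set.Iio c) c) (hz : φ ⊥ = ⊥)
    (S : Set I) : φ (sSup S) = sSup (φ '' S) := by
  rcases S.eq_empty_or_nonempty with rfl | hne
  · simp [hz]
  · set c := sSup S with hc'
    apply le_antisymm
    · by_cases hmem : c ∈ S
      · exact le_sSup ⟨c, hmem, rfl⟩
      · have hsub : S ⊆ Set.Iio c := fun x hx =>
          lt_of_le_of_ne (le_sSup hx) (by rintro rfl; exact hmem hx)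
        have hcl : c ∈ closure S := (isLUB_sSup S).mem_closure hne
        have := ((hc c).mono hsub).mem_closure_image hcl
        have hsub2 : closure (φ '' S) ⊆ Set.Iic (sSup (φ '' S)) :=
          closure_minimal (by rintro v ⟨x, hx, rfl⟩; exact Set.mem_Iic.mpr (le_sSup ⟨x, hx, rfl⟩)) isClosed_Iic
        exact hsub2 this
    · apply sSup_le; rintro v ⟨x, hx, rfl⟩; exact hmono (le_sSup hx)

lemma tnorm_sSup_right (t : I → I → I) (ht : IsTnorm t) (hl : LeftCts t) (a : I)
    (S : Set I) : t a (sSup S) = sSup ((fun x => t a x) '' S) := by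
  obtain ⟨hcomm, hassoc, hm1, hm2, hunit⟩ := ht
  apply map_sSup_gen
  · exact fun x y hxy => hm2 a x y hxy
  · exact fun x => hm2 a x 1 le_one'
  · exact fun c => (hl a c).1
  · apply le_antisymm _ bot_le
    calc t a ⊥ ≤ t 1 ⊥ := hm1 a 1 ⊥ le_one'
    _ = t ⊥ 1 := hcomm 1 ⊥
    _ = ⊥ := hunit ⊥

lemma tnorm_sSup_left (t : I → I → I) (ht : IsTnorm t) (hl : LeftCts t) (b : I)
    (S : Set I) : t (sSup S) b = sSup ((fun x => t x b) '' S) := by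
  have hcomm := ht.1
  rw [hcomm]
  rw [tnorm_sSup_right t ht hl b S]
  congr 1
  ext v; constructor <;> rintro ⟨x, hx, rfl⟩ <;> exact ⟨x, hx, (hcomm _ _)⟩

lemma conv_eq_triple (star trg : I → I → I) (hs : IsTnorm star) (ht : IsTnorm trg)
    (hl : LeftCts trg) (f g h : I → I) (a : I) :
    conv star trg (conv star trg f g) h a =
        sSup {v : I | ∃ x y z : I, star (star x y) z = a ∧
          v = trg (trg (f x) (g y)) (h z)} := by
  obtain ⟨tcomm, tassoc, tm1, tm2, tunit⟩ := ht
  apply le_antisymm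
  · apply sSup_le
    rintro v ⟨u, z, huz, rfl⟩
    rw [show conv star trg f g u = sSup {w : I | ∃ x y, star x y = u ∧ w = trg (f x) (g y)} from rfl,
      tnorm_sSup_left trg ⟨tcomm, tassoc, tm1, tm2, tunit⟩ hl]
    apply sSup_le
    rintro v ⟨w, ⟨x, y, hxy, rfl⟩, rfl⟩
    exact le_sSup ⟨x, y, z, by rw [hxy, huz], rfl⟩
  · apply sSup_le
    rintro v ⟨x, y, z, hxyz, rfl⟩
    have h1 : trg (f x) (g y) ≤ conv star trg f g (star x y) :=
      le_sSup ⟨x, y, rfl, rfl⟩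
    calc trg (trg (f x) (g y)) (h z) ≤ trg (conv star trg f g (star x y)) (h z) :=
          tm1 _ _ _ h1
    _ ≤ conv star trg (conv star trg f g) h a := le_sSup ⟨star x y, z, hxyz, rfl⟩

lemma conv_eq_triple' (star trg : I → I → I) (hs : IsTnorm star) (ht : IsTnorm trg)
    (hl : LeftCts trg) (f g h : I → I) (a : I) :
    conv star trg f (conv star trg g h) a =
        sSup {v : I | ∃ x y z : I, star (star x y) z = a ∧
          v = trg (trg (f x) (g y)) (h z)} := by
  obtain ⟨tcomm, tassoc, tm1, tm2, tunit⟩ := ht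
  obtain ⟨scomm, sassoc, -, -, -⟩ := hs
  have hset : {v : I | ∃ x y z : I, star (star x y) z = a ∧
          v = trg (trg (f x) (g y)) (h z)} =
      {v : I | ∃ x y z : I, star x (star y z) = a ∧
          v = trg (f x) (trg (g y) (h z))} := by
    ext v; constructor <;> rintro ⟨x, y, z, h1, rfl⟩
    · exact ⟨x, y, z, by rw [← sassoc, h1], by rw [tassoc]⟩
    · exact ⟨x, y, z, by rw [sassoc, h1], by rw [← tassoc]⟩
  rw [hset]
  apply le_antisymm
  · apply sSup_le
    rintro v ⟨x, u, hu, rfl⟩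
    rw [show conv star trg g h u = sSup {w : I | ∃ y z, star y z = u ∧ w = trg (g y) (h z)} from rfl,
      tnorm_sSup_right trg ⟨tcomm, tassoc, tm1, tm2, tunit⟩ hl]
    apply sSup_le
    rintro v ⟨w, ⟨y, z, hyz, rfl⟩, rfl⟩
    exact le_sSup ⟨x, y, z, by rw [hyz, hu], rfl⟩
  · apply sSup_le
    rintro v ⟨x, y, z, hxyz, rfl⟩
    have h1 : trg (g y) (h z) ≤ conv star trg g h (star y z) :=
      le_sSup ⟨y, z, rfl, rfl⟩
    calc trg (f x) (trg (g y) (h z)) ≤ trg (f x) (conv star trg g h (star y z)) :=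
          tm2 _ _ _ h1
    _ ≤ conv star trg f (conv star trg g h) a := le_sSup ⟨x, star y z, hxyz, rfl⟩

theorem stmt17 (star trg : I → I → I) (hs : IsTnorm star) (ht : IsTnorm trg)
    (hl : LeftCts trg) (f g h : I → I) :
    conv star trg (conv star trg f g) h = conv star trg f (conv star trg g h) ∧
    (∀ a : I, conv star trg (conv star trg f g) h a =
        sSup {v : I | ∃ x y z : I, star (star x y) z = a ∧
          v = trg (trg (f x) (g y)) (h z)}) ∧
    (∀ a : I, conv star trg f (conv star trg g h) a =
        sSup {v : I | ∃ x y z : I, star (star x y) z = a ∧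
          v = trg (trg (f x) (g y)) (h z)}) := by
  refine ⟨funext fun a => ?_, conv_eq_triple star trg hs ht hl f g h,
    conv_eq_triple' star trg hs ht hl f g h⟩
  rw [conv_eq_triple star trg hs ht hl f g h a, conv_eq_triple' star trg hs ht hl f g h a]
end

section
/- If △ is a border-continuous t-norm on [0,1] (i.e., a △ 1⁻ = a △ 1 = a for all a, where a △ 1⁻ = sup{a △ t : t < 1}), then for normal convex f, g : [0,1] → [0,1], the convolution f ∧_△ g (i.e., ∗_△ with ∗ = min) satisfies: (f ∧_△ g)(x) = max(f(x), g(x)) if x ∈ f⁺ ∩ g⁺; (f ∧_△ g)(x) = f(x) if x ∈ g⁺ \ f⁺; (f ∧_△ g)(x) = g(x) if x ∈ f⁺ \ g⁺; and (f ∧_△ g)(x) = f(x) △ g(x) if x ∉ f⁺ ∪ g⁺. -/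
open unitInterval

section AuxStmt19

lemma tnorm_le_left' {trg : I → I → I} (ht : IsTnorm trg) (a b : I) : trg a b ≤ a := by
  calc trg a b ≤ trg a 1 := ht.2.2.2.1 a b 1 le_one'
  _ = a := ht.2.2.2.2 a

lemma tnorm_le_right' {trg : I → I → I} (ht : IsTnorm trg) (a b : I) : trg a b ≤ b := by
  rw [ht.1]; exact tnorm_le_left' ht b a

lemma mem_fplus_iff' (f : I → I) (x : I) :
    x ∈ fplus f ↔ MonotoneOn f (Set.Icc 0 x) := by
  constructor
  · rintro ⟨S, ⟨a, rfl, hmono⟩, hx⟩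
    exact hmono.mono (Set.Icc_subset_Icc_right hx.2)
  · intro h
    exact ⟨Set.Icc 0 x, ⟨x, rfl, h⟩, ⟨nonneg', le_refl x⟩⟩

lemma decreasing_of_not_fplus' {f : I → I} (hfc : FnConvex f) {x : I}
    (hx : x ∉ fplus f) : ∀ y, x ≤ y → f y ≤ f x := by
  rw [mem_fplus_iff'] at hx
  unfold MonotoneOn at hx
  push_neg at hx
  obtain ⟨u, hu, v, hv, huv, hfvu⟩ := hx
  intro y hxy
  by_contra hcon
  push_neg at hcon
  -- hcon : f x < f y
  have h1 : min (f v) (f y) ≤ f x := hfc v x y hv.2 hxy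
  have h2 : min (f u) (f y) ≤ f x := hfc u x y hu.2 hxy
  have h3 : min (f u) (f y) ≤ f v := hfc u v y huv (le_trans hv.2 hxy)
  rcases min_le_iff.mp h1 with h | h
  · rcases min_le_iff.mp h3 with h' | h'
    · exact absurd h' (not_le.mpr hfvu)
    · exact absurd (lt_of_le_of_lt (le_trans h' h) hcon) (lt_irrefl _)
  · exact absurd (lt_of_le_of_lt h hcon) (lt_irrefl _)

lemma sSup_image_Ici_eq_one' {f : I → I} (hfn : FnNormal f) {x : I}
    (hx : x ∈ fplus f) : sSup (f '' Set.Ici x) = 1 := by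
  rw [mem_fplus_iff'] at hx
  refine le_antisymm le_one' ?_
  rw [← hfn]
  apply sSup_le
  rintro v ⟨z, rfl⟩
  rcases le_total z x with h | h
  · calc f z ≤ f x := hx ⟨nonneg', h⟩ ⟨nonneg', le_refl x⟩ h
    _ ≤ sSup (f '' Set.Ici x) := le_sSup ⟨x, le_refl x, rfl⟩
  · exact le_sSup ⟨z, h, rfl⟩

lemma le_sSup_of_border' {trg : I → I → I} (ht : IsTnorm trg) (hb : BorderCts trg)
    {g : I → I} {x : I} (hg : sSup (g '' Set.Ici x) = 1) (a : I) (S : Set I)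
    (hS : ∀ z, x ≤ z → trg a (g z) ∈ S) : a ≤ sSup S := by
  have h1 : a = sSup ((trg a) '' Set.Iio 1) := by rw [hb a, ht.2.2.2.2 a]
  rw [h1]
  apply sSup_le
  rintro v ⟨t, ht1, rfl⟩
  obtain ⟨z, hz, hw⟩ : ∃ z, x ≤ z ∧ t ≤ g z := by
    by_contra h
    push_neg at h
    have hub : sSup (g '' Set.Ici x) ≤ t := by
      apply sSup_le
      rintro w ⟨z, hz, rfl⟩
      exact (h z hz).le
    rw [hg] at hub
    exact absurd (lt_of_lt_of_le ht1 hub) (lt_irrefl t)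
  exact le_trans (ht.2.2.2.1 a t (g z) hw) (le_sSup (hS z hz))

end AuxStmt19

theorem stmt19 (trg : I → I → I) (ht : IsTnorm trg) (hb : BorderCts trg)
    (f g : I → I) (hfn : FnNormal f) (hfc : FnConvex f)
    (hgn : FnNormal g) (hgc : FnConvex g) (x : I) :
    (x ∈ fplus f ∩ fplus g →
      conv (fun a b => min a b) trg f g x = max (f x) (g x)) ∧
    (x ∈ fplus g \ fplus f → conv (fun a b => min a b) trg f g x = f x) ∧
    (x ∈ fplus f \ fplus g → conv (fun a b => min a b) trg f g x = g x) ∧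
    (x ∉ fplus f ∪ fplus g →
      conv (fun a b => min a b) trg f g x = trg (f x) (g x)) := by
  set S : Set I := {v : I | ∃ y z : I, min y z = x ∧ v = trg (f y) (g z)} with hSdef
  have hconv : conv (fun a b => min a b) trg f g x = sSup S := rfl
  have memR : ∀ z, x ≤ z → trg (f x) (g z) ∈ S := fun z hz => ⟨x, z, min_eq_left hz, rfl⟩
  have memL : ∀ y, x ≤ y → trg (f y) (g x) ∈ S := fun y hy => ⟨y, x, min_eq_right hy, rfl⟩
  have hcases : ∀ v ∈ S, ∃ y z : I, x ≤ y ∧ x ≤ z ∧ (y = x ∨ z = x) ∧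
      v = trg (f y) (g z) := by
    rintro v ⟨y, z, hmin, rfl⟩
    refine ⟨y, z, ?_, ?_, ?_, rfl⟩
    · rw [← hmin]; exact min_le_left y z
    · rw [← hmin]; exact min_le_right y z
    · rcases le_total y z with h | h
      · left; rw [← hmin, min_eq_left h]
      · right; rw [← hmin, min_eq_right h]
  refine ⟨?_, ?_, ?_, ?_⟩
  · rintro ⟨hxf, hxg⟩
    rw [hconv]
    refine le_antisymm ?_ ?_
    · apply sSup_le
      intro v hv
      obtain ⟨y, z, hy, hz, hor, rfl⟩ := hcases v hv
      rcases hor with h | h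
      <;> rw [h]
      · exact le_trans (tnorm_le_left' ht _ _) (le_max_left _ _)
      · exact le_trans (tnorm_le_right' ht _ _) (le_max_right _ _)
    · apply max_le
      · exact le_sSup_of_border' ht hb (sSup_image_Ici_eq_one' hgn hxg) (f x) S memR
      · refine le_sSup_of_border' ht hb (sSup_image_Ici_eq_one' hfn hxf) (g x) S ?_
        intro z hz
        rw [ht.1]
        exact memL z hz
  · rintro ⟨hxg, hxf⟩
    have hdec := decreasing_of_not_fplus' hfc hxf
    rw [hconv]
    refine le_antisymm ?_ ?_
    · apply sSup_le
      intro v hv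
      obtain ⟨y, z, hy, hz, hor, rfl⟩ := hcases v hv
      rcases hor with h | h
      <;> rw [h]
      · exact tnorm_le_left' ht _ _
      · exact le_trans (ht.2.2.1 (f y) (f x) (g x) (hdec y hy)) (tnorm_le_left' ht _ _)
    · exact le_sSup_of_border' ht hb (sSup_image_Ici_eq_one' hgn hxg) (f x) S memR
  · rintro ⟨hxf, hxg⟩
    have hdec := decreasing_of_not_fplus' hgc hxg
    rw [hconv]
    refine le_antisymm ?_ ?_
    · apply sSup_le
      intro v hv
      obtain ⟨y, z, hy, hz, hor, rfl⟩ := hcases v hv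
      rcases hor with h | h
      <;> rw [h]
      · exact le_trans (ht.2.2.2.1 (f x) (g z) (g x) (hdec z hz)) (tnorm_le_right' ht _ _)
      · exact tnorm_le_right' ht _ _
    · refine le_sSup_of_border' ht hb (sSup_image_Ici_eq_one' hfn hxf) (g x) S ?_
      intro z hz
      rw [ht.1]
      exact memL z hz
  · intro hx
    have hxf : x ∉ fplus f := fun h => hx (Or.inl h)
    have hxg : x ∉ fplus g := fun h => hx (Or.inr h)
    have hdf := decreasing_of_not_fplus' hfc hxf
    have hdg := decreasing_of_not_fplus' hgc hxg
    rw [hconv]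
    refine le_antisymm ?_ (le_sSup (memR x (le_refl x)))
    apply sSup_le
    intro v hv
    obtain ⟨y, z, hy, hz, hor, rfl⟩ := hcases v hv
    rcases hor with h | h
      <;> rw [h]
    · exact ht.2.2.2.1 (f x) (g z) (g x) (hdg z hz)
    · exact ht.2.2.1 (f y) (f x) (g x) (hdf y hy)
end
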